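/- Let f be a Boolean function and x a variable. A term t (not mentioning x) is a prime implicant of f|¬x ∧ f|x if and only if t is a prime implicant of f not containing any literal on x. In particular, IP(f|¬x ∧ f|x) ⊆ IP(f). -/

import Mathlib

abbrev Term (V : Type*) := V → Option Bool

def Extends {V : Type*} (a : V → Bool) (t : Term V) : Prop :=
  ∀ v b, t v = some b → a v = b

def SubTerm {V : Type*} (s t : Term V) : Prop :=
  ∀ v b, s v = some b → t v = some b

def Implicant {V : Type*} (f : (V → Bool) → Bool) (t : Term V) : Prop :=
  ∀ a, Extends a t → f a = true

def PrimeImplicant {V : Type*} (f : (V → Bool) → Bool) (t : Term V) : Prop :=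
  Implicant f t ∧ ∀ s, SubTerm s t → Implicant f s → s = t

def IP {V : Type*} (f : (V → Bool) → Bool) : Set (Term V) :=
  {t | PrimeImplicant f t}

def Compatible {V : Type*} (t t' : Term V) : Prop :=
  ∀ v b b', t v = some b → t' v = some b' → b = b'

def combine {V : Type*} (t t' : Term V) : Term V :=
  fun v => (t v).orElse (fun _ => t' v)

def maxSet {V : Type*} (S : Set (Term V)) : Set (Term V) :=
  {t ∈ S | ∀ t' ∈ S, SubTerm t' t → t' = t}

def fAnd {V : Type*} (f g : (V → Bool) → Bool) : (V → Bool) → Bool :=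
  fun a => f a && g a

def restrict {V : Type*} [DecidableEq V] (f : (V → Bool) → Bool) (x : V) (b : Bool) :
    (V → Bool) → Bool :=
  fun a => f (Function.update a x b)

def SR {V : Type*} (f : (V → Bool) → Bool) (a : V → Bool) : Set (Term V) :=
  {t | PrimeImplicant f t ∧ Extends a t}

/-! Both sides of the equivalence only look at terms not mentioning `x`: every sub-term of such
a term avoids `x` too, and on such terms `f|¬x ∧ f|x` and `f` have the same implicants, because
an assignment extends `t` iff it does so with either value at `x`. For the inclusion, a prime
implicant of a function that ignores `x`, such as `f|¬x ∧ f|x`, cannot mention `x`: dropping its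
literal on `x` leaves an implicant. -/

section

variable {V : Type*}

theorem SubTerm.refl (t : Term V) : SubTerm t t :=
  fun _ _ h => h

theorem SubTerm.apply_eq_none {s t : Term V} {x : V} (hst : SubTerm s t) (ht : t x = none) :
    s x = none := by
  cases hs : s x with
  | none => rfl
  | some b => simpa [ht] using hst x b hs

theorem primeImplicant_congr {f g : (V → Bool) → Bool} {t : Term V}
    (h : ∀ s, SubTerm s t → (Implicant g s ↔ Implicant f s)) :
    PrimeImplicant g t ↔ PrimeImplicant f t := by
  unfold PrimeImplicant
  rw [h t (SubTerm.refl t)]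
  exact and_congr_right fun _ =>
    forall_congr' fun s => forall_congr' fun hs => imp_congr_left (h s hs)

section Update

variable [DecidableEq V]

theorem extends_update_of_eq_none {a : V → Bool} {t : Term V} {x : V} (ht : t x = none)
    (ha : Extends a t) (c : Bool) : Extends (Function.update a x c) t := by
  intro v b hv
  have hvx : v ≠ x := by rintro rfl; simp [ht] at hv
  rw [Function.update_of_ne hvx]
  exact ha v b hv

theorem SubTerm.update_none (t : Term V) (x : V) : SubTerm (Function.update t x none) t := by
  intro v b hv
  by_cases hvx : v = x
  · subst hvx; simp at hv
  · rwa [Function.update_of_ne hvx] at hv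

theorem Implicant.update_none {g : (V → Bool) → Bool} {t : Term V} {x : V}
    (hg : ∀ a c, g (Function.update a x c) = g a) (ht : Implicant g t) :
    Implicant g (Function.update t x none) := by
  intro a ha
  -- re-insert the literal of `t` on `x` (if any), which `g` cannot see
  rw [← hg a ((t x).getD (a x))]
  refine ht _ fun v b hv => ?_
  by_cases hvx : v = x
  · subst hvx; simp [hv]
  · rw [Function.update_of_ne hvx]
    exact ha v b (by rwa [Function.update_of_ne hvx])

theorem PrimeImplicant.apply_eq_none {g : (V → Bool) → Bool} {t : Term V} {x : V}
    (hg : ∀ a c, g (Function.update a x c) = g a) (ht : PrimeImplicant g t) : t x = none := by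
  have h := ht.2 _ (SubTerm.update_none t x) (ht.1.update_none hg)
  rw [← h, Function.update_self]

theorem fAnd_restrict_update (f : (V → Bool) → Bool) (x : V) (a : V → Bool) (c : Bool) :
    fAnd (restrict f x false) (restrict f x true) (Function.update a x c) =
      fAnd (restrict f x false) (restrict f x true) a := by
  simp [fAnd, restrict, Function.update_idem]

theorem implicant_fAnd_restrict_iff {f : (V → Bool) → Bool} {t : Term V} {x : V}
    (ht : t x = none) :
    Implicant (fAnd (restrict f x false) (restrict f x true)) t ↔ Implicant f t := by
  simp only [Implicant, fAnd, restrict, Bool.and_eq_true]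
  refine ⟨fun h a ha => ?_, fun h a ha =>
    ⟨h _ (extends_update_of_eq_none ht ha _), h _ (extends_update_of_eq_none ht ha _)⟩⟩
  rw [← Function.update_eq_self x a]
  cases a x
  exacts [(h a ha).1, (h a ha).2]

theorem primeImplicant_fAnd_restrict_iff {f : (V → Bool) → Bool} {t : Term V} {x : V}
    (ht : t x = none) :
    PrimeImplicant (fAnd (restrict f x false) (restrict f x true)) t ↔ PrimeImplicant f t :=
  primeImplicant_congr fun _ hs => implicant_fAnd_restrict_iff (hs.apply_eq_none ht)

end Update

end

/-- a term not mentioning x is a prime implicant of f|¬x ∧ f|x iff it is a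
prime implicant of f; in particular IP(f|¬x ∧ f|x) ⊆ IP(f). -/
theorem stmt16 {V : Type*} [DecidableEq V] (f : (V → Bool) → Bool) (x : V) :
    (∀ t : Term V, t x = none →
      (PrimeImplicant (fAnd (restrict f x false) (restrict f x true)) t ↔
        PrimeImplicant f t)) ∧
    IP (fAnd (restrict f x false) (restrict f x true)) ⊆ IP f := by
  refine ⟨fun t => primeImplicant_fAnd_restrict_iff, fun t ht => ?_⟩
  exact (primeImplicant_fAnd_restrict_iff (ht.apply_eq_none (fAnd_restrict_update f x))).mp ht
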